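/- arXiv:0911.2075 — 2 statements merged into one kernel-verified Lean document; each statement's English description precedes it below -/
import Mathlib

section
/- Let G be a connected finite simple graph with N vertices, M edges, and average shortest-path length L (averaged over ordered pairs of distinct vertices). Define, for any positive bandwidth allocation C : E → ℝ with Σ_e C(e) = M, the transmission capacity R_c(C) = min over edges e of 2·C(e)·N(N-1)/B(e), where B(e) is the edge betweenness of e. Then for every such allocation C, R_c(C) ≤ 2M/L. -/
open SimpleGraph Finset

variable {V : Type*}

/-- Number of shortest `u`-`v` paths. -/
noncomputable def numSP (G : SimpleGraph V) (u v : V) : ℕ :=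
  Nat.card {p : G.Walk u v // p.IsPath ∧ p.length = G.dist u v}

/-- Number of shortest `u`-`v` paths through edge `e`. -/
noncomputable def numSPthru (G : SimpleGraph V) (e : Sym2 V) (u v : V) : ℕ :=
  Nat.card {p : G.Walk u v // p.IsPath ∧ p.length = G.dist u v ∧ e ∈ p.edges}

/-- Edge betweenness centrality (sum over ordered pairs of distinct vertices). -/
noncomputable def btw (G : SimpleGraph V) [Fintype V] [DecidableEq V] (e : Sym2 V) : ℝ :=
  ∑ u, ∑ v, if u ≠ v then (numSPthru G e u v : ℝ) / (numSP G u v : ℝ) else 0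

/-- Average shortest path length over ordered pairs of distinct vertices. -/
noncomputable def avgL (G : SimpleGraph V) [Fintype V] : ℝ :=
  (∑ u, ∑ v, (G.dist u v : ℝ)) /
    ((Fintype.card V : ℝ) * ((Fintype.card V : ℝ) - 1))

/-- A routing scheme: a nonempty finite set of simple paths for each ordered
pair of distinct vertices. -/
structure Routing (G : SimpleGraph V) [DecidableEq V] where
  paths : ∀ u v : V, Finset (G.Walk u v)
  nonempty : ∀ u v : V, u ≠ v → (paths u v).Nonempty
  isPath : ∀ u v : V, ∀ p ∈ paths u v, p.IsPath

/-- Effective betweenness of edge `e` under a routing scheme. -/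
noncomputable def effBtw (G : SimpleGraph V) [Fintype V] [DecidableEq V]
    (R : Routing G) (e : Sym2 V) : ℝ :=
  ∑ u, ∑ v, if u ≠ v then
    (((R.paths u v).filter (fun p => e ∈ p.edges)).card : ℝ) /
      ((R.paths u v).card : ℝ) else 0

/-- Average routed path length over ordered pairs of distinct vertices. -/
noncomputable def routeAvgLen (G : SimpleGraph V) [Fintype V] [DecidableEq V]
    (R : Routing G) : ℝ :=
  (∑ u, ∑ v, if u ≠ v then
      (∑ p ∈ R.paths u v, (p.length : ℝ)) / ((R.paths u v).card : ℝ) else 0) /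
    ((Fintype.card V : ℝ) * ((Fintype.card V : ℝ) - 1))

section Aux

variable [Fintype V] [DecidableEq V] (G : SimpleGraph V) [DecidableRel G.Adj]

/-- Repackaging of the shortest-path-through-`e` subtype. -/
def thruEquiv (e : Sym2 V) (u v : V) :
    {p : G.Walk u v // p.IsPath ∧ p.length = G.dist u v ∧ e ∈ p.edges} ≃
    {q : {p : G.Walk u v // p.IsPath ∧ p.length = G.dist u v} // e ∈ q.1.edges} where
  toFun p := ⟨⟨p.1, p.2.1, p.2.2.1⟩, p.2.2.2⟩
  invFun q := ⟨q.1.1, q.1.2.1, q.1.2.2, q.2⟩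
  left_inv _ := rfl
  right_inv _ := rfl

lemma numSP_eq (u v : V) :
    numSP G u v =
      (Finset.univ : Finset {p : G.Walk u v // p.IsPath ∧ p.length = G.dist u v}).card := by
  rw [numSP, Nat.card_eq_fintype_card, Fintype.card]

lemma numSPthru_eq (e : Sym2 V) (u v : V) :
    numSPthru G e u v =
      ((Finset.univ : Finset {p : G.Walk u v // p.IsPath ∧ p.length = G.dist u v}).filter
        (fun q => e ∈ q.1.edges)).card := by
  rw [numSPthru, Nat.card_congr (thruEquiv G e u v), Nat.card_eq_fintype_card,
    Fintype.card_subtype]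

lemma numSP_pos (hconn : G.Connected) (u v : V) : 0 < numSP G u v := by
  rw [numSP_eq]
  rw [Finset.card_pos]
  obtain ⟨p, hp⟩ := (hconn u v).exists_path_of_dist
  exact ⟨⟨p, hp.1, hp.2⟩, Finset.mem_univ _⟩

/-- Summing `numSPthru` over all edges counts each shortest path `dist` times. -/
lemma sum_numSPthru (u v : V) :
    ∑ e ∈ G.edgeFinset, numSPthru G e u v = G.dist u v * numSP G u v := by
  simp only [numSPthru_eq, numSP_eq]
  have : ∀ e ∈ G.edgeFinset,
      ((Finset.univ : Finset {p : G.Walk u v // p.IsPath ∧ p.length = G.dist u v}).filter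
        (fun q => e ∈ q.1.edges)).card
      = ∑ q : {p : G.Walk u v // p.IsPath ∧ p.length = G.dist u v},
          if e ∈ q.1.edges then 1 else 0 := by
    intro e _
    rw [Finset.card_filter]
  rw [Finset.sum_congr rfl this, Finset.sum_comm]
  have key : ∀ q : {p : G.Walk u v // p.IsPath ∧ p.length = G.dist u v},
      ∑ e ∈ G.edgeFinset, (if e ∈ q.1.edges then 1 else 0) = G.dist u v := by
    intro q
    rw [← Finset.card_filter]
    have hfil : G.edgeFinset.filter (fun e => e ∈ q.1.edges) = q.1.edges.toFinset := by
      ext e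
      simp only [Finset.mem_filter, List.mem_toFinset, mem_edgeFinset]
      exact ⟨fun h => h.2, fun h => ⟨q.1.edges_subset_edgeSet h, h⟩⟩
    rw [hfil, List.toFinset_card_of_nodup q.2.1.edges_nodup, q.1.length_edges, q.2.2]
  rw [Finset.sum_congr rfl (fun q _ => key q), Finset.sum_const, Finset.card_univ,
    smul_eq_mul, mul_comm, Fintype.card]

lemma btw_nonneg_term (e : Sym2 V) (u v : V) :
    0 ≤ if u ≠ v then (numSPthru G e u v : ℝ) / (numSP G u v : ℝ) else 0 := by
  split <;> positivity

lemma btw_pos (hconn : G.Connected) {e : Sym2 V} (he : e ∈ G.edgeFinset) :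
    0 < btw G e := by
  induction e with
  | _ a b =>
    rw [mem_edgeFinset, mem_edgeSet] at he
    have hne : a ≠ b := he.ne
    have hterm : 0 < if a ≠ b then (numSPthru G s(a, b) a b : ℝ) / (numSP G a b : ℝ) else 0 := by
      rw [if_pos hne]
      apply div_pos
      · have : 0 < numSPthru G s(a, b) a b := by
          rw [numSPthru_eq, Finset.card_pos]
          have hdist : G.dist a b = 1 := SimpleGraph.dist_eq_one_iff_adj.mpr he
          have hw : (SimpleGraph.Walk.cons he SimpleGraph.Walk.nil).IsPath :=
            (SimpleGraph.Path.singleton he).2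
          have hlen : (SimpleGraph.Walk.cons he SimpleGraph.Walk.nil).length = G.dist a b := by
            rw [hdist]; rfl
          have hedge : s(a, b) ∈ (SimpleGraph.Walk.cons he SimpleGraph.Walk.nil).edges :=
            SimpleGraph.Path.mk'_mem_edges_singleton he
          exact ⟨⟨SimpleGraph.Walk.cons he SimpleGraph.Walk.nil, hw, hlen⟩,
            Finset.mem_filter.mpr ⟨Finset.mem_univ _, hedge⟩⟩
        exact_mod_cast this
      · exact_mod_cast numSP_pos G hconn a b
    have h1 : (∑ v, if a ≠ v then (numSPthru G s(a, b) a v : ℝ) / (numSP G a v : ℝ) else 0) > 0 := by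
      apply Finset.sum_pos' (fun v _ => btw_nonneg_term G s(a, b) a v) ⟨b, Finset.mem_univ b, hterm⟩
    exact Finset.sum_pos' (fun u _ => Finset.sum_nonneg (fun v _ => btw_nonneg_term G _ u v))
      ⟨a, Finset.mem_univ a, h1⟩

lemma sum_btw (hconn : G.Connected) :
    ∑ e ∈ G.edgeFinset, btw G e = ∑ u, ∑ v, (G.dist u v : ℝ) := by
  unfold _root_.btw
  rw [Finset.sum_comm]
  refine Finset.sum_congr rfl fun u _ => ?_
  rw [Finset.sum_comm]
  refine Finset.sum_congr rfl fun v _ => ?_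
  by_cases huv : u ≠ v
  · simp only [if_pos huv]
    rw [← Finset.sum_div]
    have hsp : (numSP G u v : ℝ) ≠ 0 := by
      exact_mod_cast (numSP_pos G hconn u v).ne'
    rw [div_eq_iff hsp]
    have := sum_numSPthru G u v
    calc ∑ e ∈ G.edgeFinset, (numSPthru G e u v : ℝ)
        = ((∑ e ∈ G.edgeFinset, numSPthru G e u v : ℕ) : ℝ) := by push_cast; ring
      _ = ((G.dist u v * numSP G u v : ℕ) : ℝ) := by rw [this]
      _ = (G.dist u v : ℝ) * (numSP G u v : ℝ) := by push_cast; ring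
  · push_neg at huv
    subst huv
    simp [SimpleGraph.dist_self]

end Aux

/-- any positive allocation with total M has R_c(C) ≤ 2M/L. -/
theorem stmt2 {V : Type*} [Fintype V] [DecidableEq V] (G : SimpleGraph V)
    [DecidableRel G.Adj] (hconn : G.Connected) (h2 : 2 ≤ Fintype.card V)
    (hne : G.edgeFinset.Nonempty) (C : Sym2 V → ℝ)
    (hpos : ∀ e ∈ G.edgeFinset, 0 < C e)
    (hsum : ∑ e ∈ G.edgeFinset, C e = (G.edgeFinset.card : ℝ)) :
    G.edgeFinset.inf' hne (fun e => 2 * C e * ((Fintype.card V : ℝ) * ((Fintype.card V : ℝ) - 1)) / btw G e)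
      ≤ 2 * (G.edgeFinset.card : ℝ) / avgL G := by
  set N : ℝ := (Fintype.card V : ℝ) with hN
  set K : ℝ := N * (N - 1) with hK
  set M : ℝ := (G.edgeFinset.card : ℝ) with hM
  set D : ℝ := ∑ u, ∑ v, (G.dist u v : ℝ) with hD
  have hN2 : (2 : ℝ) ≤ N := by rw [hN]; exact_mod_cast h2
  have hKpos : 0 < K := by rw [hK]; nlinarith
  have hDpos : 0 < D := by
    obtain ⟨a, b, hab⟩ := Fintype.exists_pair_of_one_lt_card (by omega : 1 < Fintype.card V)
    have hdab : 0 < G.dist a b := hconn.pos_dist_of_ne hab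
    have hnonneg : ∀ u ∈ (Finset.univ : Finset V), 0 ≤ ∑ v, (G.dist u v : ℝ) :=
      fun u _ => Finset.sum_nonneg fun v _ => by positivity
    refine Finset.sum_pos' hnonneg ⟨a, Finset.mem_univ a, ?_⟩
    refine Finset.sum_pos' (fun v _ => by positivity) ⟨b, Finset.mem_univ b, ?_⟩
    exact_mod_cast hdab
  have hL : avgL G = D / K := rfl
  have hLpos : 0 < avgL G := by rw [hL]; positivity
  have hMpos : 0 < M := by
    rw [hM]
    exact_mod_cast Finset.card_pos.mpr hne
  by_contra hcon
  push_neg at hcon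
  rw [Finset.lt_inf'_iff] at hcon
  have hsumbtw : ∑ e ∈ G.edgeFinset, btw G e = D := sum_btw G hconn
  have hKL : K * avgL G = D := by
    rw [hL]
    field_simp
  have key : ∀ e ∈ G.edgeFinset, M * btw G e / D < C e := by
    intro e he
    have hb : 0 < btw G e := btw_pos G hconn he
    have h1 := hcon e he
    rw [div_lt_div_iff₀ hLpos hb] at h1
    -- h1 : 2 * M * btw G e < 2 * C e * K * avgL G
    rw [div_lt_iff₀ hDpos]
    have h2' : 2 * C e * K * avgL G = 2 * C e * D := by rw [← hKL]; ring
    linarith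
  have hlt : ∑ e ∈ G.edgeFinset, M * btw G e / D < ∑ e ∈ G.edgeFinset, C e :=
    Finset.sum_lt_sum_of_nonempty hne key
  have heq : ∑ e ∈ G.edgeFinset, M * btw G e / D = M := by
    rw [← Finset.sum_div, ← Finset.mul_sum, hsumbtw]
    field_simp
  rw [heq, hsum] at hlt
  exact lt_irrefl M hlt
end

section
/- Let G be a connected finite simple graph with N vertices and M edges, and let Γ be any routing scheme with Γ-average path length L^Γ. Then for any positive allocation C with Σ_e C(e) = M, the capacity R_c^Γ(C) = min_e 2C(e)N(N-1)/B^Γ(e) satisfies R_c^Γ(C) ≤ 2M/L^Γ ≤ 2M/L, where L is the average shortest-path length (since every path between u and v has length ≥ d(u,v), L^Γ ≥ L). -/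
open SimpleGraph Finset

variable {V : Type*}

section Aux

variable {V : Type*} [Fintype V] [DecidableEq V]

lemma count_lemma (G : SimpleGraph V) [DecidableRel G.Adj] (R : Routing G) (u v : V) :
    ∑ e ∈ G.edgeFinset, (((R.paths u v).filter (fun p => e ∈ p.edges)).card : ℝ)
      = ∑ p ∈ R.paths u v, (p.length : ℝ) := by
  have key : ∀ p ∈ R.paths u v,
      ((G.edgeFinset.filter (fun e => e ∈ p.edges)).card : ℝ) = (p.length : ℝ) := by
    intro p hp
    have hsub : ∀ e ∈ p.edges, e ∈ G.edgeFinset := fun e he =>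
      SimpleGraph.mem_edgeFinset.mpr (p.edges_subset_edgeSet he)
    have hnodup : p.edges.Nodup := (R.isPath u v p hp).edges_nodup
    have hfe : (G.edgeFinset.filter (fun e => e ∈ p.edges)) = p.edges.toFinset := by
      ext e
      simp only [Finset.mem_filter, List.mem_toFinset]
      exact ⟨fun h => h.2, fun h => ⟨hsub e h, h⟩⟩
    rw [hfe, List.toFinset_card_of_nodup hnodup, p.length_edges]
  calc ∑ e ∈ G.edgeFinset, (((R.paths u v).filter (fun p => e ∈ p.edges)).card : ℝ)
      = ∑ e ∈ G.edgeFinset, ∑ p ∈ R.paths u v, (if e ∈ p.edges then (1:ℝ) else 0) := by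
        refine Finset.sum_congr rfl fun e _ => ?_
        rw [Finset.sum_boole]
    _ = ∑ p ∈ R.paths u v, ∑ e ∈ G.edgeFinset, (if e ∈ p.edges then (1:ℝ) else 0) :=
        Finset.sum_comm
    _ = ∑ p ∈ R.paths u v, (p.length : ℝ) := by
        refine Finset.sum_congr rfl fun p hp => ?_
        rw [Finset.sum_boole]
        exact key p hp

lemma sum_effBtw (G : SimpleGraph V) [DecidableRel G.Adj] (R : Routing G) :
    ∑ e ∈ G.edgeFinset, effBtw G R e
      = ∑ u, ∑ v, if u ≠ v then
          (∑ p ∈ R.paths u v, (p.length : ℝ)) / ((R.paths u v).card : ℝ) else 0 := by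
  unfold effBtw
  rw [Finset.sum_comm]
  refine Finset.sum_congr rfl fun u _ => ?_
  rw [Finset.sum_comm]
  refine Finset.sum_congr rfl fun v _ => ?_
  by_cases huv : u ≠ v
  · simp only [if_pos huv]
    rw [← Finset.sum_div, count_lemma]
  · simp [huv]

lemma effBtw_nonneg (G : SimpleGraph V) [DecidableRel G.Adj] (R : Routing G) (e : Sym2 V) :
    0 ≤ effBtw G R e := by
  refine Finset.sum_nonneg fun u _ => Finset.sum_nonneg fun v _ => ?_
  split <;> positivity

end Aux

/-- R_c^Γ(C) ≤ 2M/L^Γ ≤ 2M/L for any routing scheme and any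
positive allocation with total M. -/
theorem stmt6 {V : Type*} [Fintype V] [DecidableEq V] (G : SimpleGraph V)
    [DecidableRel G.Adj] (hconn : G.Connected) (h2 : 2 ≤ Fintype.card V)
    (hne : G.edgeFinset.Nonempty) (R : Routing G) (C : Sym2 V → ℝ)
    (hpos : ∀ e ∈ G.edgeFinset, 0 < C e)
    (hsum : ∑ e ∈ G.edgeFinset, C e = (G.edgeFinset.card : ℝ)) :
    G.edgeFinset.inf' hne (fun e => 2 * C e * ((Fintype.card V : ℝ) * ((Fintype.card V : ℝ) - 1)) / effBtw G R e)
        ≤ 2 * (G.edgeFinset.card : ℝ) / routeAvgLen G R ∧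
    2 * (G.edgeFinset.card : ℝ) / routeAvgLen G R
        ≤ 2 * (G.edgeFinset.card : ℝ) / avgL G := by
  have h2' : (2:ℝ) ≤ (Fintype.card V : ℝ) := by exact_mod_cast h2
  set N1 : ℝ := (Fintype.card V : ℝ) * ((Fintype.card V : ℝ) - 1) with hN1def
  have hN1pos : 0 < N1 := by rw [hN1def]; nlinarith
  have hM : (0:ℝ) < (G.edgeFinset.card : ℝ) := by exact_mod_cast hne.card_pos
  -- avgL > 0
  obtain ⟨a, b, hab⟩ := Fintype.exists_pair_of_one_lt_card (by omega : 1 < Fintype.card V)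
  have hdistpos : 0 < (∑ u, ∑ v, (G.dist u v : ℝ)) := by
    refine Finset.sum_pos'
      (fun u _ => Finset.sum_nonneg fun v _ => by positivity) ⟨a, Finset.mem_univ a, ?_⟩
    refine Finset.sum_pos' (fun v _ => by positivity) ⟨b, Finset.mem_univ b, ?_⟩
    exact_mod_cast hconn.pos_dist_of_ne hab
  have havg_pos : 0 < avgL G := div_pos hdistpos hN1pos
  -- avgL ≤ routeAvgLen
  have hterm : ∀ u v : V, (G.dist u v : ℝ) ≤ (if u ≠ v then
      (∑ p ∈ R.paths u v, (p.length : ℝ)) / ((R.paths u v).card : ℝ) else 0) := by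
    intro u v
    by_cases huv : u ≠ v
    · rw [if_pos huv]
      have hcard : (0:ℝ) < ((R.paths u v).card : ℝ) := by
        exact_mod_cast (R.nonempty u v huv).card_pos
      rw [le_div_iff₀ hcard]
      calc (G.dist u v : ℝ) * ((R.paths u v).card : ℝ)
          = ∑ _p ∈ R.paths u v, (G.dist u v : ℝ) := by
            rw [Finset.sum_const, nsmul_eq_mul, mul_comm]
        _ ≤ ∑ p ∈ R.paths u v, (p.length : ℝ) := by
            refine Finset.sum_le_sum fun p _ => ?_
            exact_mod_cast SimpleGraph.dist_le p
    · push_neg at huv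
      subst huv
      simp
  have hle : avgL G ≤ routeAvgLen G R := by
    unfold avgL routeAvgLen
    gcongr with u hu v hv
    exact hterm u v
  have hrpos : 0 < routeAvgLen G R := lt_of_lt_of_le havg_pos hle
  have hS : ∑ e ∈ G.edgeFinset, effBtw G R e = N1 * routeAvgLen G R := by
    rw [sum_effBtw, routeAvgLen, mul_comm, div_mul_cancel₀ _ hN1pos.ne']
  constructor
  · by_cases hall : ∀ e ∈ G.edgeFinset, 0 < effBtw G R e
    · have hex : ∃ e ∈ G.edgeFinset,
          C e * (N1 * routeAvgLen G R) ≤ (G.edgeFinset.card : ℝ) * effBtw G R e := by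
        by_contra h
        push_neg at h
        have hlt : ∑ e ∈ G.edgeFinset, (G.edgeFinset.card : ℝ) * effBtw G R e
            < ∑ e ∈ G.edgeFinset, C e * (N1 * routeAvgLen G R) :=
          Finset.sum_lt_sum_of_nonempty hne fun e he => h e he
        have e1 : ∑ e ∈ G.edgeFinset, (G.edgeFinset.card : ℝ) * effBtw G R e
            = (G.edgeFinset.card : ℝ) * (N1 * routeAvgLen G R) := by
          rw [← Finset.mul_sum, hS]
        have e2 : ∑ e ∈ G.edgeFinset, C e * (N1 * routeAvgLen G R)
            = (G.edgeFinset.card : ℝ) * (N1 * routeAvgLen G R) := by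
          rw [← Finset.sum_mul, hsum]
        rw [e1, e2] at hlt
        exact lt_irrefl _ hlt
      obtain ⟨e, he, hce⟩ := hex
      refine le_trans (Finset.inf'_le _ he) ?_
      rw [div_le_div_iff₀ (hall e he) hrpos]
      nlinarith [hce]
    · push_neg at hall
      obtain ⟨e, he, hb⟩ := hall
      have hb0 : effBtw G R e = 0 := le_antisymm hb (effBtw_nonneg G R e)
      refine le_trans (Finset.inf'_le _ he) ?_
      rw [hb0, div_zero]
      positivity
  · exact div_le_div_of_nonneg_left (by positivity) havg_pos hle
end
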